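/- arXiv:2302.00365 — 3 statements merged into one kernel-verified Lean document; each statement's English description precedes it below -/
import Mathlib

section
/- Let ν ∈ ℕ and b, c ∈ ℂ with Re(b) > 0. Then ∫_{ℝ²} (1/π) e^{-(x²+y²)} · (conj α)^ν · α · exp(-conj(α)·(b·α - c)) dx dy = (1/(b+1)²)·(c·δ_{ν,0} + δ_{ν,1}), where α = x + iy, conj α = x - iy, and δ denotes the Kronecker delta. In particular the integrand is integrable on ℝ² under the stated hypothesis. -/
/-!
The Gaussian weight `e^{-|α|²}` merges into the exponent, so with `a = b + 1` the integral is
`J_ν(c) / π` where `J_ν(c) = ∫ ᾱ^ν α e^{-ᾱ(aα - c)}`. Differentiating under the integral sign in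
`c` gives `J_ν' = J_{ν+1}` (domination by `r^n e^{Rr - Re(a) r²} ≤ C e^{-Re(a) r²/2}`).
Separating variables, `J_0(c)` is a combination of the one-dimensional moments
`∫ x e^{-ax² + tx} dx = (t / 2a) ∫ e^{-ax² + tx} dx` (integrate the derivative of `e^{-ax² + tx}`),
which gives `J_0(c) = πc/a²`; hence `J_1 = π/a²` and `J_ν = 0` for `ν ≥ 2`.
-/

open MeasureTheory Complex ComplexConjugate Real

noncomputable section

namespace CoherentStateIntegral

theorem pow_mul_exp_sub_mul_sq_le (n : ℕ) (R : ℝ) {k : ℝ} (hk : 0 < k) {r : ℝ} (hr : 0 ≤ r) :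
    r ^ n * Real.exp (R * r - k * r ^ 2) ≤
      n.factorial * Real.exp ((1 + |R|) ^ 2 / (2 * k)) * Real.exp (-(k / 2) * r ^ 2) := by
  have hpow : r ^ n ≤ n.factorial * Real.exp r := by
    have := Real.pow_div_factorial_le_exp r hr n
    rwa [div_le_iff₀ (by positivity), mul_comm] at this
  -- AM-GM: `(1 + |R|) r ≤ (1 + |R|)² / (2k) + (k/2) r²`
  have hexp : r + (R * r - k * r ^ 2) ≤ (1 + |R|) ^ 2 / (2 * k) + -(k / 2) * r ^ 2 := by
    have hR : R * r ≤ |R| * r := mul_le_mul_of_nonneg_right (le_abs_self R) hr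
    have hamgm : (1 + |R|) * r ≤ (1 + |R|) ^ 2 / (2 * k) + k / 2 * r ^ 2 := by
      rw [div_add' _ _ _ (by positivity), le_div_iff₀ (by positivity)]
      nlinarith [sq_nonneg (1 + |R| - k * r)]
    nlinarith
  calc r ^ n * Real.exp (R * r - k * r ^ 2)
      ≤ n.factorial * Real.exp r * Real.exp (R * r - k * r ^ 2) := by gcongr
    _ ≤ n.factorial * Real.exp ((1 + |R|) ^ 2 / (2 * k) + -(k / 2) * r ^ 2) := by
      rw [mul_assoc, ← Real.exp_add]; gcongr
    _ = _ := by rw [Real.exp_add, mul_assoc]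

theorem integrable_of_norm_le_pow_mul_exp {X E : Type*} [MeasurableSpace X] {μ : Measure X}
    [NormedAddCommGroup E] {f : X → E} {ρ : X → ℝ} {n : ℕ} {R k : ℝ} (hk : 0 < k)
    (hf : AEStronglyMeasurable f μ) (hρ : ∀ x, 0 ≤ ρ x)
    (hgauss : Integrable (fun x => Real.exp (-(k / 2) * ρ x ^ 2)) μ)
    (hle : ∀ x, ‖f x‖ ≤ ρ x ^ n * Real.exp (R * ρ x - k * ρ x ^ 2)) : Integrable f μ :=
  (hgauss.const_mul _).mono' hf <| .of_forall fun x =>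
    (hle x).trans (pow_mul_exp_sub_mul_sq_le n R hk (hρ x))

def toComplex (p : ℝ × ℝ) : ℂ := p.1 + p.2 * I

theorem norm_toComplex_sq (p : ℝ × ℝ) : ‖toComplex p‖ ^ 2 = p.1 ^ 2 + p.2 ^ 2 := by
  rw [Complex.sq_norm, toComplex, normSq_add_mul_I]

@[fun_prop]
theorem continuous_toComplex : Continuous toComplex := by
  unfold toComplex; fun_prop

theorem integrable_exp_neg_mul_norm_toComplex_sq {k : ℝ} (hk : 0 < k) :
    Integrable (fun p : ℝ × ℝ => Real.exp (-k * ‖toComplex p‖ ^ 2)) := by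
  simp_rw [norm_toComplex_sq, mul_add, Real.exp_add]
  exact (integrable_exp_neg_mul_sq hk).mul_prod (integrable_exp_neg_mul_sq hk)

def integrand (a c : ℂ) (ν : ℕ) (z : ℂ) : ℂ := conj z ^ ν * z * cexp (-conj z * (a * z - c))

theorem norm_integrand_le (a : ℂ) (ν : ℕ) {c : ℂ} {R : ℝ} (hc : ‖c‖ ≤ R) (z : ℂ) :
    ‖integrand a c ν z‖ ≤ ‖z‖ ^ (ν + 1) * Real.exp (R * ‖z‖ - a.re * ‖z‖ ^ 2) := by
  have hre : (-conj z * (a * z - c)).re = -a.re * ‖z‖ ^ 2 + (c * conj z).re := by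
    have : -conj z * (a * z - c) = -a * (‖z‖ ^ 2 : ℝ) + c * conj z := by
      push_cast; rw [← conj_mul']; ring
    rw [this, add_re, re_mul_ofReal, neg_re]
  have hlin : (c * conj z).re ≤ R * ‖z‖ := by
    refine (re_le_norm _).trans ?_
    rw [norm_mul, RCLike.norm_conj]
    exact mul_le_mul_of_nonneg_right hc (norm_nonneg z)
  rw [integrand, norm_mul, norm_mul, norm_pow, RCLike.norm_conj, norm_exp, hre, ← pow_succ]
  gcongr
  linarith

theorem continuous_integrand (a c : ℂ) (ν : ℕ) : Continuous (integrand a c ν) := by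
  unfold integrand; fun_prop

theorem hasDerivAt_integrand (a c : ℂ) (ν : ℕ) (z : ℂ) :
    HasDerivAt (fun c => integrand a c ν z) (integrand a c (ν + 1) z) c := by
  have h := (((hasDerivAt_id c).const_sub (a * z)).const_mul (-conj z)).cexp.const_mul
    (conj z ^ ν * z)
  exact h.congr_deriv (by simp only [integrand, id]; ring)

variable {a : ℂ}

theorem integrable_pow_norm_toComplex_mul_exp (ha : 0 < a.re) (n : ℕ) (R : ℝ) :
    Integrable (fun p : ℝ × ℝ =>
      ‖toComplex p‖ ^ n * Real.exp (R * ‖toComplex p‖ - a.re * ‖toComplex p‖ ^ 2)) :=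
  integrable_of_norm_le_pow_mul_exp ha (by fun_prop) (fun p => norm_nonneg _)
    (integrable_exp_neg_mul_norm_toComplex_sq (half_pos ha))
    (fun _ => by rw [Real.norm_of_nonneg (by positivity)])

theorem integrable_integrand (ha : 0 < a.re) (c : ℂ) (ν : ℕ) :
    Integrable (fun p : ℝ × ℝ => integrand a c ν (toComplex p)) :=
  (integrable_pow_norm_toComplex_mul_exp ha (ν + 1) ‖c‖).mono'
    ((continuous_integrand a c ν).comp continuous_toComplex).aestronglyMeasurable
    (.of_forall fun p => norm_integrand_le a ν le_rfl (toComplex p))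

/-- `π I_ν(a - 1, c)` in the paper's notation. -/
def momentIntegral (a c : ℂ) (ν : ℕ) : ℂ := ∫ p : ℝ × ℝ, integrand a c ν (toComplex p)

theorem hasDerivAt_momentIntegral (ha : 0 < a.re) (c : ℂ) (ν : ℕ) :
    HasDerivAt (fun c => momentIntegral a c ν) (momentIntegral a c (ν + 1)) c := by
  refine (hasDerivAt_integral_of_dominated_loc_of_deriv_le
    (F' := fun c p => integrand a c (ν + 1) (toComplex p)) (Metric.ball_mem_nhds c one_pos)
    (.of_forall fun c' => (integrable_integrand ha c' ν).aestronglyMeasurable)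
    (integrable_integrand ha c ν) (integrable_integrand ha c (ν + 1)).aestronglyMeasurable
    (.of_forall fun p c' hc' => norm_integrand_le a (ν + 1) ?_ (toComplex p))
    (integrable_pow_norm_toComplex_mul_exp ha (ν + 2) (‖c‖ + 1))
    (.of_forall fun p c' _ => hasDerivAt_integrand a c' ν (toComplex p))).2
  have := norm_le_norm_add_norm_sub' c' c
  rw [Metric.mem_ball, dist_eq_norm] at hc'
  linarith

theorem integrable_mul_cexp_quadratic (ha : 0 < a.re) (t : ℂ) :
    Integrable (fun x : ℝ => x * cexp (-a * x ^ 2 + t * x)) := by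
  refine integrable_of_norm_le_pow_mul_exp (n := 1) (R := |t.re|) ha (by fun_prop)
    (fun x => abs_nonneg x) (by simpa using integrable_exp_neg_mul_sq (half_pos ha)) fun x => ?_
  rw [norm_mul, norm_exp, norm_real, Real.norm_eq_abs, pow_one, sq_abs]
  gcongr
  have : t.re * x ≤ |t.re| * |x| := by rw [← abs_mul]; exact le_abs_self _
  simpa [← ofReal_pow, mul_comm] using this

theorem integral_mul_cexp_quadratic (ha : 0 < a.re) (t : ℂ) :
    ∫ x : ℝ, x * cexp (-a * x ^ 2 + t * x) = t / (2 * a) * ∫ x : ℝ, cexp (-a * x ^ 2 + t * x) := by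
  have ha0 : a ≠ 0 := by rintro rfl; simp at ha
  have hE : Integrable (fun x : ℝ => cexp (-a * x ^ 2 + t * x)) := by
    simpa using integrable_cexp_quadratic ha t 0
  have hxE := integrable_mul_cexp_quadratic ha t
  have hderiv (x : ℝ) : HasDerivAt (fun x : ℝ => cexp (-a * x ^ 2 + t * x))
      (-2 * a * (x * cexp (-a * x ^ 2 + t * x)) + t * cexp (-a * x ^ 2 + t * x)) x := by
    have := (((hasDerivAt_pow 2 (x : ℂ)).const_mul (-a)).add
      ((hasDerivAt_id (x : ℂ)).const_mul t)).cexp.comp_ofReal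
    refine this.congr_deriv ?_
    simp only [Pi.add_apply, Nat.cast_ofNat, Nat.add_one_sub_one, pow_one, id_eq]
    ring
  have h := integral_eq_zero_of_hasDerivAt_of_integrable hderiv
    ((hxE.const_mul _).add (hE.const_mul _)) hE
  rw [integral_add (hxE.const_mul _) (hE.const_mul _), integral_const_mul,
    integral_const_mul] at h
  rw [div_mul_eq_mul_div, eq_div_iff (mul_ne_zero two_ne_zero ha0)]
  linear_combination -h

theorem integral_cexp_quadratic_mul_integral_cexp_quadratic_neg_I_mul (ha : 0 < a.re) (t : ℂ) :
    (∫ x : ℝ, cexp (-a * x ^ 2 + t * x)) * (∫ x : ℝ, cexp (-a * x ^ 2 + -I * t * x)) = π / a := by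
  have hgauss (s : ℂ) : ∫ x : ℝ, cexp (-a * x ^ 2 + s * x) =
      (π / a) ^ (1 / 2 : ℂ) * cexp (s ^ 2 / (4 * a)) := by
    simpa [div_neg] using integral_cexp_quadratic (b := -a) (by simpa using ha) s 0
  have hsqrt : (π / a : ℂ) ^ (1 / 2 : ℂ) * (π / a : ℂ) ^ (1 / 2 : ℂ) = π / a := by
    rw [← sq, one_div, ← Nat.cast_ofNat, cpow_nat_inv_pow _ two_ne_zero]
  have hexp : t ^ 2 / (4 * a) + (-I * t) ^ 2 / (4 * a) = 0 := by
    rw [← add_div, mul_pow, neg_sq, I_sq]; ring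
  calc _ = (π / a : ℂ) ^ (1 / 2 : ℂ) * (π / a : ℂ) ^ (1 / 2 : ℂ) *
        cexp (t ^ 2 / (4 * a) + (-I * t) ^ 2 / (4 * a)) := by
        rw [hgauss, hgauss, Complex.exp_add]; ring
    _ = π / a := by rw [hsqrt, hexp, Complex.exp_zero, mul_one]

theorem momentIntegral_zero (ha : 0 < a.re) (c : ℂ) : momentIntegral a c 0 = π * c / a ^ 2 := by
  have hE (t : ℂ) : Integrable (fun x : ℝ => cexp (-a * x ^ 2 + t * x)) := by
    simpa using integrable_cexp_quadratic ha t 0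
  have hxE := integrable_mul_cexp_quadratic ha
  have hsplit : (fun p : ℝ × ℝ => integrand a c 0 (toComplex p)) = fun p =>
      p.1 * cexp (-a * p.1 ^ 2 + c * p.1) * cexp (-a * p.2 ^ 2 + -I * c * p.2) +
        I * (cexp (-a * p.1 ^ 2 + c * p.1) * (p.2 * cexp (-a * p.2 ^ 2 + -I * c * p.2))) := by
    ext p
    have hexp : -conj (toComplex p) * (a * toComplex p - c) =
        (-a * p.1 ^ 2 + c * p.1) + (-a * p.2 ^ 2 + -I * c * p.2) := by
      simp only [toComplex, map_add, map_mul, conj_ofReal, conj_I]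
      linear_combination (a * p.2 ^ 2) * I_sq
    rw [integrand, hexp, Complex.exp_add, toComplex]
    ring
  rw [momentIntegral, hsplit, Measure.volume_eq_prod,
    integral_add ((hxE c).mul_prod (hE _)) (((hE c).mul_prod (hxE _)).const_mul I),
    integral_const_mul,
    integral_prod_mul (fun x : ℝ => x * cexp (-a * x ^ 2 + c * x)) fun y : ℝ =>
      cexp (-a * y ^ 2 + -I * c * y),
    integral_prod_mul (fun x : ℝ => cexp (-a * x ^ 2 + c * x)) fun y : ℝ =>
      y * cexp (-a * y ^ 2 + -I * c * y),
    integral_mul_cexp_quadratic ha, integral_mul_cexp_quadratic ha]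
  linear_combination (c / a) * integral_cexp_quadratic_mul_integral_cexp_quadratic_neg_I_mul ha c -
    c / (2 * a) * (∫ x : ℝ, cexp (-a * x ^ 2 + c * x)) *
      (∫ x : ℝ, cexp (-a * x ^ 2 + -I * c * x)) * I_sq

theorem momentIntegral_succ (ha : 0 < a.re) (c : ℂ) (ν : ℕ) :
    momentIntegral a c (ν + 1) = deriv (fun c => momentIntegral a c ν) c :=
  (hasDerivAt_momentIntegral ha c ν).deriv.symm

theorem momentIntegral_one (ha : 0 < a.re) (c : ℂ) : momentIntegral a c 1 = π / a ^ 2 := by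
  rw [momentIntegral_succ ha, funext (momentIntegral_zero ha)]
  simp [mul_div_right_comm]

theorem momentIntegral_add_two (ha : 0 < a.re) (c : ℂ) (n : ℕ) :
    momentIntegral a c (n + 2) = 0 := by
  induction n generalizing c with
  | zero => rw [momentIntegral_succ ha, funext (momentIntegral_one ha), deriv_const]
  | succ n ih => rw [momentIntegral_succ ha, funext ih, deriv_const]

theorem momentIntegral_eq (ha : 0 < a.re) (c : ℂ) (ν : ℕ) :
    momentIntegral a c ν = π / a ^ 2 * (c * (if ν = 0 then 1 else 0) + if ν = 1 then 1 else 0) := by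
  rcases ν with _ | _ | n
  · simp [momentIntegral_zero ha, mul_div_right_comm]
  · simp [momentIntegral_one ha]
  · simp [momentIntegral_add_two ha]

end CoherentStateIntegral

open CoherentStateIntegral in
/-- The Lemma of Appendix A: for `ν ∈ ℕ`, `b c ∈ ℂ` with `Re b > 0`,
`∫ dμ(α) (conj α)^ν α e^{-conj α (bα - c)} = (c δ_{ν,0} + δ_{ν,1})/(b+1)²`,
where `dμ(α) = (1/π) e^{-(x²+y²)} dx dy` and `α = x + iy`; moreover the integrand is
integrable on `ℝ²`. -/
theorem stmt0 (ν : ℕ) (b c : ℂ) (hb : 0 < b.re) :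
    Integrable (fun p : ℝ × ℝ =>
        (1 / (Real.pi : ℂ)) * Complex.exp (-((p.1 : ℂ)^2 + (p.2 : ℂ)^2)) *
          (starRingEnd ℂ ((p.1 : ℂ) + (p.2 : ℂ) * Complex.I))^ν *
          ((p.1 : ℂ) + (p.2 : ℂ) * Complex.I) *
          Complex.exp (-(starRingEnd ℂ ((p.1 : ℂ) + (p.2 : ℂ) * Complex.I)) *
            (b * ((p.1 : ℂ) + (p.2 : ℂ) * Complex.I) - c)))
      ∧ (∫ p : ℝ × ℝ,
          (1 / (Real.pi : ℂ)) * Complex.exp (-((p.1 : ℂ)^2 + (p.2 : ℂ)^2)) *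
            (starRingEnd ℂ ((p.1 : ℂ) + (p.2 : ℂ) * Complex.I))^ν *
            ((p.1 : ℂ) + (p.2 : ℂ) * Complex.I) *
            Complex.exp (-(starRingEnd ℂ ((p.1 : ℂ) + (p.2 : ℂ) * Complex.I)) *
              (b * ((p.1 : ℂ) + (p.2 : ℂ) * Complex.I) - c)))
        = (1 / (b + 1)^2) *
            (c * (if ν = 0 then 1 else 0) + (if ν = 1 then 1 else 0)) := by
  have ha : 0 < (b + 1).re := by simpa using hb.trans (lt_add_one b.re)
  have hweight (p : ℝ × ℝ) :
      cexp (-((p.1 : ℂ) ^ 2 + (p.2 : ℂ) ^ 2)) * cexp (-conj (toComplex p) * (b * toComplex p - c)) =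
        cexp (-conj (toComplex p) * ((b + 1) * toComplex p - c)) := by
    rw [← Complex.exp_add]
    congr 1
    simp only [toComplex, map_add, map_mul, conj_ofReal, conj_I]
    linear_combination -(p.2 : ℂ) ^ 2 * I_sq
  have hfun : (fun p : ℝ × ℝ =>
        (1 / (π : ℂ)) * cexp (-((p.1 : ℂ) ^ 2 + (p.2 : ℂ) ^ 2)) * conj (toComplex p) ^ ν *
          toComplex p * cexp (-conj (toComplex p) * (b * toComplex p - c))) =
      fun p => (1 / (π : ℂ)) * integrand (b + 1) c ν (toComplex p) := by
    ext p
    rw [integrand, ← hweight]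
    ring
  refine ⟨?_, ?_⟩
  · exact hfun ▸ (integrable_integrand ha c ν).const_mul _
  · calc _ = 1 / (π : ℂ) * momentIntegral (b + 1) c ν := by
          rw [momentIntegral, ← integral_const_mul]
          exact congrArg (fun f => ∫ p, f p) hfun
      _ = _ := by
          rw [momentIntegral_eq ha]
          field_simp
end
end

section
/- Fix α ∈ ℂ. Let 𝐏_α denote the orthogonal projection of ℓ²(ℕ, ℂ) onto the finite-dimensional (hence complete) subspace spanned by c_α and c_{-α}, let P be the parity operator (P f)(n) = (-1)ⁿ f(n), and let σ_x be the bounded operator v ↦ ⟪c_{-α}, v⟫·c_α + ⟪c_α, v⟫·c_{-α}. Then for every v ∈ ℓ²(ℕ, ℂ): 𝐏_α(P(𝐏_α v)) - σ_x v = -e^{-2|α|²} · 𝐏_α v. (This operator identity is what yields the paper's trace-norm formula ‖𝐏_α P 𝐏_α - σ_x‖₁ = 2 e^{-2|α|²} for α ≠ 0, since 𝐏_α is then a rank-2 orthogonal projection.) -/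
/-! The states `c_α` and `c_{-α}` are unit vectors with real overlap `ε = e^{-2|α|²}`, and the
parity operator swaps them. Hence on their span `P + ε = σₓ`. Since `σₓ v` depends on `v` only
through `⟪c_{±α}, v⟫ = ⟪c_{±α}, 𝐏_α v⟫`, this gives `P 𝐏_α v = σₓ v - ε 𝐏_α v`, a vector of the
span, which `𝐏_α` therefore fixes. -/

noncomputable def catCoeff (α : ℂ) (n : ℕ) : ℂ :=
  Complex.exp (-((‖α‖ : ℂ))^2 / 2) * α^n / ((Real.sqrt (Nat.factorial n) : ℝ) : ℂ)

noncomputable def coherent (α : ℂ) (h : Memℓp (catCoeff α) 2) : lp (fun _ : ℕ => ℂ) 2 :=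
  ⟨catCoeff α, h⟩

open scoped InnerProductSpace ComplexConjugate

section InnerProductSpace

variable {𝕜 E : Type*} [RCLike 𝕜] [NormedAddCommGroup E] [InnerProductSpace 𝕜 E]
  {K : Submodule 𝕜 E} {proj : E → E}

theorem proj_eq_self_of_mem (hmem : ∀ w, proj w ∈ K)
    (horth : ∀ w, ∀ x ∈ K, ⟪x, w - proj w⟫_𝕜 = 0) {x : E} (hx : x ∈ K) : proj x = x := by
  have hself : ⟪x - proj x, x - proj x⟫_𝕜 = 0 := horth x _ (K.sub_mem hx (hmem x))
  exact (sub_eq_zero.mp (inner_self_eq_zero.mp hself)).symm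

theorem inner_proj_right (horth : ∀ w, ∀ x ∈ K, ⟪x, w - proj w⟫_𝕜 = 0) {x : E} (hx : x ∈ K)
    (w : E) : ⟪x, proj w⟫_𝕜 = ⟪x, w⟫_𝕜 := by
  rw [← sub_eq_zero, ← inner_sub_right, ← neg_sub, inner_neg_right, horth w x hx, neg_zero]

theorem apply_add_smul_of_mem_span_pair {a b : E} {ε : 𝕜} (T : E →ₗ[𝕜] E) (hTa : T a = b) (hTb : T b = a)
    (haa : ⟪a, a⟫_𝕜 = 1) (hbb : ⟪b, b⟫_𝕜 = 1) (hab : ⟪a, b⟫_𝕜 = ε) (hba : ⟪b, a⟫_𝕜 = ε)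
    {p : E} (hp : p ∈ Submodule.span 𝕜 {a, b}) :
    T p + ε • p = ⟪b, p⟫_𝕜 • a + ⟪a, p⟫_𝕜 • b := by
  obtain ⟨x, y, rfl⟩ := Submodule.mem_span_pair.mp hp
  simp only [map_add, map_smul, hTa, hTb, inner_add_right, inner_smul_right, haa, hbb, hab, hba,
    smul_add, add_smul, mul_smul, mul_one, smul_comm ε]
  abel

end InnerProductSpace

theorem catCoeff_neg (α : ℂ) (n : ℕ) : catCoeff (-α) n = (-1) ^ n * catCoeff α n := by
  unfold catCoeff
  rw [norm_neg, neg_pow]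
  ring

theorem inner_coherent (β γ : ℂ) (hβ : Memℓp (catCoeff β) 2) (hγ : Memℓp (catCoeff γ) 2) :
    ⟪coherent β hβ, coherent γ hγ⟫_ℂ
      = Complex.exp (-((‖β‖ : ℂ)) ^ 2 / 2 - ((‖γ‖ : ℂ)) ^ 2 / 2 + conj β * γ) := by
  have hterm : ∀ n : ℕ, ⟪(coherent β hβ : ℕ → ℂ) n, (coherent γ hγ : ℕ → ℂ) n⟫_ℂ
      = (Complex.exp (-((‖β‖ : ℂ)) ^ 2 / 2) * Complex.exp (-((‖γ‖ : ℂ)) ^ 2 / 2))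
        * ((conj β * γ) ^ n / (Nat.factorial n : ℂ)) := by
    intro n
    have hsqrt : ((Real.sqrt (Nat.factorial n) : ℝ) : ℂ) * ((Real.sqrt (Nat.factorial n) : ℝ) : ℂ)
        = (Nat.factorial n : ℂ) := by
      rw [← Complex.ofReal_mul, Real.mul_self_sqrt (Nat.cast_nonneg _), Complex.ofReal_natCast]
    have hexp : conj (Complex.exp (-((‖β‖ : ℂ)) ^ 2 / 2)) = Complex.exp (-((‖β‖ : ℂ)) ^ 2 / 2) := by
      rw [← Complex.exp_conj]
      simp [map_div₀, map_pow, map_neg, Complex.conj_ofReal, map_ofNat]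
    show catCoeff γ n * conj (catCoeff β n) = _
    unfold catCoeff
    rw [map_div₀, map_mul, map_pow, Complex.conj_ofReal, hexp, div_mul_div_comm, hsqrt, mul_pow]
    ring
  rw [lp.inner_eq_tsum, tsum_congr hterm, tsum_mul_left,
    (NormedSpace.expSeries_div_hasSum_exp (conj β * γ)).tsum_eq, ← Complex.exp_eq_exp_ℂ,
    ← Complex.exp_add, ← Complex.exp_add]
  ring_nf

theorem conj_mul_self_eq_norm_sq (α : ℂ) : conj α * α = (‖α‖ : ℂ) ^ 2 := by
  rw [mul_comm, Complex.mul_conj, Complex.normSq_eq_norm_sq, Complex.ofReal_pow]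

theorem inner_coherent_self (α : ℂ) (hα : Memℓp (catCoeff α) 2) :
    ⟪coherent α hα, coherent α hα⟫_ℂ = 1 := by
  rw [inner_coherent, conj_mul_self_eq_norm_sq, ← Complex.exp_zero]
  ring_nf

theorem inner_coherent_neg_right (α : ℂ) (hα : Memℓp (catCoeff α) 2)
    (hmα : Memℓp (catCoeff (-α)) 2) :
    ⟪coherent α hα, coherent (-α) hmα⟫_ℂ = ((Real.exp (-2 * ‖α‖ ^ 2) : ℝ) : ℂ) := by
  rw [inner_coherent, norm_neg, mul_neg, conj_mul_self_eq_norm_sq, Complex.ofReal_exp]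
  push_cast
  ring_nf

theorem inner_coherent_neg_left (α : ℂ) (hα : Memℓp (catCoeff α) 2)
    (hmα : Memℓp (catCoeff (-α)) 2) :
    ⟪coherent (-α) hmα, coherent α hα⟫_ℂ = ((Real.exp (-2 * ‖α‖ ^ 2) : ℝ) : ℂ) := by
  rw [← inner_conj_symm, inner_coherent_neg_right, Complex.conj_ofReal]

theorem parity_coherent {P : lp (fun _ : ℕ => ℂ) 2 → lp (fun _ : ℕ => ℂ) 2}
    (hP : ∀ (f : lp (fun _ : ℕ => ℂ) 2) (n : ℕ), (P f : ∀ _ : ℕ, ℂ) n = (-1)^n * f n)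
    {β γ : ℂ} (hγβ : γ = -β) (hβ : Memℓp (catCoeff β) 2) (hγ : Memℓp (catCoeff γ) 2) :
    P (coherent β hβ) = coherent γ hγ := by
  subst hγβ
  ext n
  rw [hP]
  exact (catCoeff_neg β n).symm

/-- With `𝐏_α` the orthogonal projection onto `span{|α⟩, |-α⟩}` (characterized by having
values in the span and residuals orthogonal to it), `P` the parity operator, and
`σₓ = |α⟩⟨-α| + |-α⟩⟨α|`, one has the operator identity
`𝐏_α P 𝐏_α - σₓ = -e^{-2|α|²} 𝐏_α` (which yields `‖𝐏_α P 𝐏_α - σₓ‖₁ = 2e^{-2|α|²}`). -/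
theorem stmt6 (α : ℂ) (hα : Memℓp (catCoeff α) 2) (hmα : Memℓp (catCoeff (-α)) 2)
    (P : lp (fun _ : ℕ => ℂ) 2 →L[ℂ] lp (fun _ : ℕ => ℂ) 2)
    (hP : ∀ (f : lp (fun _ : ℕ => ℂ) 2) (n : ℕ), (P f : ∀ _ : ℕ, ℂ) n = (-1)^n * f n)
    (Pproj : lp (fun _ : ℕ => ℂ) 2 → lp (fun _ : ℕ => ℂ) 2)
    (hPmem : ∀ w, Pproj w ∈
      Submodule.span ℂ ({coherent α hα, coherent (-α) hmα} : Set (lp (fun _ : ℕ => ℂ) 2)))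
    (hPorth : ∀ w, ∀ x ∈
      Submodule.span ℂ ({coherent α hα, coherent (-α) hmα} : Set (lp (fun _ : ℕ => ℂ) 2)),
      inner (𝕜 := ℂ) x (w - Pproj w) = 0) :
    ∀ v : lp (fun _ : ℕ => ℂ) 2,
      Pproj (P (Pproj v))
          - ((inner (𝕜 := ℂ) (coherent (-α) hmα) v) • coherent α hα
              + (inner (𝕜 := ℂ) (coherent α hα) v) • coherent (-α) hmα)
        = (-((Real.exp (-2 * (‖α‖)^2) : ℝ) : ℂ)) • Pproj v := by
  intro v
  set a := coherent α hα
  set b := coherent (-α) hmα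
  have haS : a ∈ Submodule.span ℂ {a, b} := Submodule.subset_span (by simp)
  have hbS : b ∈ Submodule.span ℂ {a, b} := Submodule.subset_span (by simp)
  have hPPv : P (Pproj v) = (⟪b, Pproj v⟫_ℂ • a + ⟪a, Pproj v⟫_ℂ • b)
      - ((Real.exp (-2 * ‖α‖ ^ 2) : ℝ) : ℂ) • Pproj v :=
    eq_sub_of_add_eq <| apply_add_smul_of_mem_span_pair (P : _ →ₗ[ℂ] _)
      (parity_coherent hP rfl hα hmα) (parity_coherent hP (neg_neg α).symm hmα hα)
      (inner_coherent_self α hα) (inner_coherent_self (-α) hmα)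
      (inner_coherent_neg_right α hα hmα) (inner_coherent_neg_left α hα hmα) (hPmem v)
  have hPPv_mem : P (Pproj v) ∈ Submodule.span ℂ {a, b} := by
    rw [hPPv]
    exact Submodule.sub_mem _ (Submodule.add_mem _ (Submodule.smul_mem _ _ haS)
      (Submodule.smul_mem _ _ hbS)) (Submodule.smul_mem _ _ (hPmem v))
  rw [proj_eq_self_of_mem hPmem hPorth hPPv_mem, hPPv, inner_proj_right hPorth haS,
    inner_proj_right hPorth hbS, neg_smul]
  abel
end

section
/- Let ω₀, ε, w, p, κ, α₀ ∈ ℝ with ω₀ ≠ 0, set Ω = ω₀ - ε·w, and define α : ℝ → ℂ by α(t) = α₀·e^{-iΩt} + (ε/ω₀)·[ i·κ·(1 - cos(Ωt)) - (κ + i·α₀·p)·sin(Ωt) ]. Then there exists a constant C ≥ 0, independent of t (one may take C = (|w|(|κ| + |p||α₀|) + |p|(3|κ| + |p||α₀|))/|ω₀|), such that for all t ∈ ℝ: |α'(t) + i·((ω₀ - εw)·α(t) + εp·conj(α(t))) + εκ| ≤ C·ε². In other words, α(t) solves the small-amplitude linear system dα/dt = -i((ω₀-εw)α + εp·conj(α))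 - εκ up to a residual that is uniformly O(ε²). -/
/-!
The free part `α₀ e^{-iΩt}` satisfies `α' + iΩα = 0` exactly, and the correction
`g(θ) = iκ(1 - cos θ) - (κ + iα₀p) sin θ` is chosen so that `t ↦ g(Ωt)` solves
`g' + iΩg = -Ω(κ + iα₀p e^{iΩt})`. Substituting `α = α₀ e^{-iΩt} + (ε/ω₀) g(Ωt)`, the terms of
order `ε` combine to `ε(1 - Ω/ω₀)(κ + iα₀p e^{iΩt})`, which is `ε²w/ω₀ · (κ + iα₀p e^{iΩt})`
because `Ω = ω₀ - εw`. The only other residual term is `iεp · conj((ε/ω₀) g)`, so the whole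
residual is `ε²/ω₀` times a quantity bounded uniformly in `t`.
-/

open Complex ComplexConjugate

noncomputable def correction (κ q : ℂ) (θ : ℝ) : ℂ :=
  I * κ * (1 - (Real.cos θ : ℂ)) - (κ + I * q) * (Real.sin θ : ℂ)

noncomputable def approxSolution (ω₀ ε p κ α₀ Ω : ℝ) (t : ℝ) : ℂ :=
  α₀ * exp (-I * Ω * t) + (ε / ω₀ : ℂ) * correction κ (α₀ * p) (Ω * t)

theorem norm_correction_le (κ q : ℂ) (θ : ℝ) : ‖correction κ q θ‖ ≤ 3 * ‖κ‖ + ‖q‖ := by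
  have hc : ‖1 - (Real.cos θ : ℂ)‖ ≤ 2 := by
    rw [← ofReal_one, ← ofReal_sub, norm_real, Real.norm_eq_abs, abs_le]
    constructor <;> linarith [Real.neg_one_le_cos θ, Real.cos_le_one θ]
  have hs : ‖(Real.sin θ : ℂ)‖ ≤ 1 := by
    rw [norm_real, Real.norm_eq_abs]; exact Real.abs_sin_le_one θ
  calc ‖correction κ q θ‖
      ≤ ‖κ‖ * ‖1 - (Real.cos θ : ℂ)‖ + (‖κ‖ + ‖q‖) * ‖(Real.sin θ : ℂ)‖ := by
        refine (norm_sub_le _ _).trans ?_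
        simp only [norm_mul, norm_I, one_mul]
        gcongr
        exact (norm_add_le _ _).trans (by rw [norm_mul, norm_I, one_mul])
    _ ≤ ‖κ‖ * 2 + (‖κ‖ + ‖q‖) * 1 := by gcongr
    _ = 3 * ‖κ‖ + ‖q‖ := by ring

theorem hasDerivAt_correction (κ q : ℂ) (Ω t : ℝ) :
    HasDerivAt (fun t : ℝ => correction κ q (Ω * t))
      (Ω * (I * κ * Real.sin (Ω * t) - (κ + I * q) * Real.cos (Ω * t))) t := by
  have hθ : HasDerivAt (fun t : ℝ => Ω * t) Ω t := by
    simpa using (hasDerivAt_id t).const_mul Ω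
  have hcos := ((Real.hasDerivAt_cos (Ω * t)).comp t hθ).ofReal_comp
  have hsin := ((Real.hasDerivAt_sin (Ω * t)).comp t hθ).ofReal_comp
  refine ((((hasDerivAt_const t (1 : ℂ)).sub hcos).const_mul (I * κ)).sub
    (hsin.const_mul (κ + I * q))).congr_deriv ?_
  push_cast
  ring

theorem correction_deriv_add_I_mul_self (κ q : ℂ) (θ : ℝ) :
    (I * κ * Real.sin θ - (κ + I * q) * Real.cos θ) + I * correction κ q θ
      = -(κ + I * q * exp (θ * I)) := by
  rw [exp_mul_I, correction, ofReal_cos, ofReal_sin]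
  linear_combination κ * (1 - cos (θ : ℂ)) * I_sq

theorem hasDerivAt_approxSolution (ω₀ ε p κ α₀ Ω t : ℝ) :
    HasDerivAt (approxSolution ω₀ ε p κ α₀ Ω)
      (α₀ * (-I * Ω * exp (-I * Ω * t)) + (ε / ω₀ : ℂ) * (Ω * (I * κ * Real.sin (Ω * t)
        - (κ + I * (α₀ * p)) * Real.cos (Ω * t)))) t := by
  have hexp : HasDerivAt (fun t : ℝ => exp (-I * Ω * t)) (-I * Ω * exp (-I * Ω * t)) t := by
    simpa [mul_comm] using ((ofRealCLM.hasDerivAt (x := t)).const_mul (-I * Ω)).cexp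
  exact (hexp.const_mul _).add ((hasDerivAt_correction κ (α₀ * p) Ω t).const_mul _)

theorem residual_approxSolution {ω₀ ε w p κ α₀ Ω : ℝ} (hω : ω₀ ≠ 0) (hΩ : Ω = ω₀ - ε * w)
    (t : ℝ) :
    deriv (approxSolution ω₀ ε p κ α₀ Ω) t + I * (Ω * approxSolution ω₀ ε p κ α₀ Ω t
        + ε * p * conj (approxSolution ω₀ ε p κ α₀ Ω t)) + ε * κ
      = ε ^ 2 / ω₀ * (w * (κ + I * (α₀ * p) * exp ((Ω * t : ℝ) * I))
          + I * p * conj (correction κ (α₀ * p) (Ω * t))) := by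
  have hcorr := correction_deriv_add_I_mul_self κ (α₀ * p) (Ω * t)
  have hconj : conj (exp (-I * Ω * t)) = exp ((Ω * t : ℝ) * I) := by
    rw [← exp_conj]
    congr 1
    simp only [neg_mul, map_neg, map_mul, conj_I, conj_ofReal, neg_neg, ofReal_mul]
    ring
  have hω' : (ω₀ : ℂ) ≠ 0 := ofReal_ne_zero.mpr hω
  rw [(hasDerivAt_approxSolution ω₀ ε p κ α₀ Ω t).deriv]
  simp only [approxSolution, map_add, map_mul, map_div₀, conj_ofReal, hconj]
  have hΩ' : (Ω : ℂ) = ω₀ - ε * w := by exact_mod_cast hΩ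
  linear_combination (ε * Ω / ω₀) * hcorr
    - (ε / ω₀) * (κ + I * (α₀ * p) * exp ((Ω * t : ℝ) * I)) * hΩ'
    - ε * (κ + I * (α₀ * p) * exp ((Ω * t : ℝ) * I)) * mul_inv_cancel₀ hω'

theorem norm_residual_le (ω₀ ε w p κ α₀ θ : ℝ) :
    ‖ε ^ 2 / ω₀ * (w * (κ + I * (α₀ * p) * exp (θ * I)) + I * p * conj (correction κ (α₀ * p) θ))‖
      ≤ (|w| * (|κ| + |p| * |α₀|) + |p| * (3 * |κ| + |p| * |α₀|)) / |ω₀| * ε ^ 2 := by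
  have hg := norm_correction_le κ (α₀ * p) θ
  simp only [norm_mul, norm_real, Real.norm_eq_abs] at hg
  have hforcing : ‖(κ : ℂ) + I * (α₀ * p) * exp (θ * I)‖ ≤ |κ| + |p| * |α₀| := by
    refine (norm_add_le _ _).trans_eq ?_
    simp only [norm_mul, norm_real, Real.norm_eq_abs, norm_I, norm_exp_ofReal_mul_I]
    ring
  have hsum : ‖w * ((κ : ℂ) + I * (α₀ * p) * exp (θ * I))
      + I * p * conj (correction κ (α₀ * p) θ)‖ ≤
        |w| * (|κ| + |p| * |α₀|) + |p| * (3 * |κ| + |p| * |α₀|) := by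
    refine (norm_add_le _ _).trans ?_
    simp only [norm_mul, norm_real, Real.norm_eq_abs, norm_I, one_mul, RCLike.norm_conj]
    gcongr
    linarith
  rw [norm_mul, norm_div, norm_pow, norm_real, norm_real, Real.norm_eq_abs, Real.norm_eq_abs,
    sq_abs, div_mul_eq_mul_div, div_mul_eq_mul_div, mul_comm (ε ^ 2)]
  gcongr

/-- The solution claimed in Appendix A for the small-amplitude dynamics:
`α(t) = α₀ e^{-iΩt} + (ε/ω₀)[iκ(1-cos Ωt) - (κ + iα₀p) sin Ωt]` with `Ω = ω₀ - εw`
solves `dα/dt = -i((ω₀-εw)α + εp·conj α) - εκ` up to a residual uniformly `O(ε²)`. -/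
theorem stmt14 (ω₀ ε w p κ α₀ : ℝ) (hω : ω₀ ≠ 0) (Ω : ℝ) (hΩ : Ω = ω₀ - ε * w)
    (f : ℝ → ℂ)
    (hf : f = fun t : ℝ =>
      (α₀ : ℂ) * Complex.exp (-Complex.I * (Ω : ℂ) * (t : ℂ))
        + ((ε : ℂ) / (ω₀ : ℂ)) *
          (Complex.I * (κ : ℂ) * (1 - (Real.cos (Ω * t) : ℂ))
            - ((κ : ℂ) + Complex.I * (α₀ : ℂ) * (p : ℂ)) * (Real.sin (Ω * t) : ℂ))) :
    ∃ C : ℝ, 0 ≤ C ∧ ∀ t : ℝ,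
      ‖(deriv f t
          + Complex.I * (((ω₀ : ℂ) - (ε : ℂ) * (w : ℂ)) * f t
              + (ε : ℂ) * (p : ℂ) * (starRingEnd ℂ (f t)))
          + (ε : ℂ) * (κ : ℂ))‖ ≤ C * ε^2 := by
  have hf' : f = approxSolution ω₀ ε p κ α₀ Ω := by
    rw [hf]; funext t; simp only [approxSolution, correction, mul_assoc]
  have hΩ' : (ω₀ : ℂ) - ε * w = Ω := by rw [hΩ]; push_cast; rfl
  refine ⟨(|w| * (|κ| + |p| * |α₀|) + |p| * (3 * |κ| + |p| * |α₀|)) / |ω₀|, by positivity,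
    fun t => ?_⟩
  rw [hf', hΩ', residual_approxSolution hω hΩ t]
  exact norm_residual_le ω₀ ε w p κ α₀ (Ω * t)
end
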